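/- arXiv:2001.00221 — 2 statements merged into one kernel-verified Lean document; each statement's English description precedes it below -/
import Mathlib

section
/- For every integer n ≥ 5, n − 1 ≤ χ_td(KG(n,2)). -/
/-- The vertex type of the Kneser graph `KG(n,2)`: 2-element subsets of `{0,…,n-1}`. -/
abbrev KVert (n : ℕ) := {s : Finset (Fin n) // s.card = 2}

/-- The Kneser graph `KG(n,2)`: vertices are 2-subsets, adjacent iff disjoint. -/
def KG2 (n : ℕ) : SimpleGraph (KVert n) where
  Adj u v := Disjoint u.1 v.1
  symm := ⟨fun u v h => h.symm⟩
  loopless := ⟨fun u h => by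
    have h2 := u.2
    have h' : Disjoint u.1 u.1 := h
    rw [disjoint_self] at h'
    simp [h'] at h2⟩

/-- A proper coloring of `G` with `k` (nonempty) color classes: a partition of the
vertex set into `k` nonempty independent sets. -/
def IsProperColoring {V : Type*} (G : SimpleGraph V) {k : ℕ} (C : Fin k → Set V) : Prop :=
  (∀ v, ∃! i, v ∈ C i) ∧ (∀ i, (C i).Nonempty) ∧
    ∀ i, ∀ u ∈ C i, ∀ w ∈ C i, ¬ G.Adj u w

/-- A total dominator coloring: a proper coloring such that every vertex is adjacent to
all vertices of some (nonempty) color class. -/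
def IsTDColoring {V : Type*} (G : SimpleGraph V) {k : ℕ} (C : Fin k → Set V) : Prop :=
  IsProperColoring G C ∧ ∀ v, ∃ i, (C i).Nonempty ∧ ∀ u ∈ C i, G.Adj v u

/-- The chromatic number: minimum number of color classes in a proper coloring. -/
noncomputable def chromNum {V : Type*} (G : SimpleGraph V) : ℕ :=
  sInf {k | ∃ C : Fin k → Set V, IsProperColoring G C}

/-- The total dominator chromatic number: minimum number of color classes in a TDC. -/
noncomputable def tdChromNum {V : Type*} (G : SimpleGraph V) : ℕ :=
  sInf {k | ∃ C : Fin k → Set V, IsTDColoring G C}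

/-- A total dominating set: every vertex has a neighbor in `S`. -/
def IsTotalDomSet {V : Type*} (G : SimpleGraph V) (S : Set V) : Prop :=
  ∀ v, ∃ u ∈ S, G.Adj v u

/-- The total domination number: minimum size of a total dominating set. -/
noncomputable def totalDomNum {V : Type*} [Fintype V] (G : SimpleGraph V) : ℕ :=
  sInf {k | ∃ S : Finset V, IsTotalDomSet G ↑S ∧ S.card = k}

/-- A set of vertices of `KG(n,2)` is starlike if all its 2-subsets share a common symbol. -/
def Starlike {n : ℕ} (A : Set (KVert n)) : Prop :=
  ∃ a : Fin n, ∀ v ∈ A, a ∈ v.1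

/-- A set of vertices of `KG(n,2)` is triangular if it equals `{{a,b},{a,c},{b,c}}`
for three distinct symbols `a, b, c`. -/
def Triangular {n : ℕ} (A : Set (KVert n)) : Prop :=
  ∃ a b c : Fin n, a ≠ b ∧ a ≠ c ∧ b ≠ c ∧
    A = {v : KVert n | v.1 = {a, b} ∨ v.1 = {a, c} ∨ v.1 = {b, c}}

/-!
Every color class of a proper coloring of `KG(n,2)` is an intersecting family of pairs, hence a
star (all pairs through a center) or a triangle (the three pairs inside a 3-set). Suppose there are
`k ≤ n - 2` classes, `t` of them triangles. The symbols that are not star centers form a set `W`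
with `|W| ≥ t + 2`, and every pair inside `W` lies in a triangle class, so
`C(t + 2, 2) ≤ C(|W|, 2) ≤ 3t`. This forces `t = 1, |W| = 3` or `t = 2, |W| = 4`. In the second
case the two triangles lie in `W` and share a pair; in the first, a vertex inside the triangle
is dominated by no class. As `tdChromNum` is an infimum over `ℕ`, some TDC must also exist:
singleton classes work once `n ≥ 4`.
-/

open Finset

namespace Finset

variable {α ι : Type*} [DecidableEq α]

lemma subset_of_powersetCard_two_subset {s t : Finset α} (hs : 2 ≤ #s)
    (h : s.powersetCard 2 ⊆ t.powersetCard 2) : s ⊆ t :=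
  calc s = (s.powersetCard 2).sup id := (powersetCard_sup s 1 hs).symm
    _ ⊆ t := Finset.sup_le fun u hu => (mem_powersetCard.1 (h hu)).1

lemma exists_eq_pair_of_mem {s : Finset α} (hs : #s = 2) {a : α} (ha : a ∈ s) :
    ∃ b, b ≠ a ∧ s = {a, b} := by
  obtain ⟨x, y, hxy, rfl⟩ := card_eq_two.mp hs
  rcases mem_insert.1 ha with rfl | ha
  · exact ⟨y, hxy.symm, rfl⟩
  · rw [mem_singleton.1 ha]
    exact ⟨x, hxy, pair_comm x y⟩

lemma eq_pair_of_mem_of_mem {s : Finset α} (hs : #s = 2) {a b : α} (ha : a ∈ s) (hb : b ∈ s)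
    (hab : a ≠ b) : s = {a, b} :=
  (eq_of_subset_of_card_le (insert_subset ha (singleton_subset_iff.2 hb))
    (by rw [hs, card_pair hab])).symm

lemma subset_triple_of_not_disjoint_pairs {x y z : α} {s : Finset α} (hs : #s = 2)
    (hxy : x ≠ y) (hxz : x ≠ z) (hyz : y ≠ z) (h₁ : ¬Disjoint {x, y} s) (h₂ : ¬Disjoint {y, z} s)
    (h₃ : ¬Disjoint {x, z} s) : s ⊆ {x, y, z} := by
  obtain ⟨a, b, -, rfl⟩ := card_eq_two.mp hs
  simp only [not_disjoint_iff, mem_insert, mem_singleton] at h₁ h₂ h₃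
  simp only [insert_subset_iff, mem_insert, mem_singleton, singleton_subset_iff]
  grind

lemma eq_pair_of_subset_triple {x y z : α} {s : Finset α} (hs : #s = 2) (h : s ⊆ {x, y, z}) :
    s = {x, y} ∨ s = {y, z} ∨ s = {x, z} := by
  obtain ⟨a, b, hab, rfl⟩ := card_eq_two.mp hs
  simp only [insert_subset_iff, mem_insert, mem_singleton, singleton_subset_iff] at h
  rcases h with ⟨rfl | rfl | rfl, rfl | rfl | rfl⟩ <;> simp_all [pair_comm]

lemma choose_card_le_of_forall_subset {r m : ℕ} {W : Finset α} {I : Finset ι}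
    {T : ι → Finset α} (hT : ∀ i ∈ I, #(T i) ≤ m) (hcov : ∀ e ⊆ W, #e = r → ∃ i ∈ I, e ⊆ T i) :
    (#W).choose r ≤ #I * m.choose r :=
  calc (#W).choose r = #(W.powersetCard r) := (card_powersetCard r W).symm
    _ ≤ #(I.biUnion fun i => (T i).powersetCard r) := card_le_card fun e he => by
        obtain ⟨heW, her⟩ := mem_powersetCard.1 he
        obtain ⟨i, hi, heT⟩ := hcov e heW her
        exact mem_biUnion.2 ⟨i, hi, mem_powersetCard.2 ⟨heT, her⟩⟩
    _ ≤ #I * m.choose r := card_biUnion_le_card_mul _ _ _ fun i hi => by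
        rw [card_powersetCard]
        exact Nat.choose_le_choose r (hT i hi)

/-- Two triangles whose pairs cover those of a 4-set `W` must both lie in `W`, hence share
a pair. -/
lemma two_le_card_inter_of_powersetCard_two_subset_union {W T₁ T₂ : Finset α} (hW : #W = 4)
    (h₁ : #T₁ = 3) (h₂ : #T₂ = 3)
    (h : W.powersetCard 2 ⊆ T₁.powersetCard 2 ∪ T₂.powersetCard 2) : 2 ≤ #(T₁ ∩ T₂) := by
  have heq : W.powersetCard 2 = T₁.powersetCard 2 ∪ T₂.powersetCard 2 :=
    eq_of_subset_of_card_le h <| (card_union_le _ _).trans <| by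
      simp only [card_powersetCard, h₁, h₂, hW]; rfl
  have hT₁ : T₁ ⊆ W := subset_of_powersetCard_two_subset (by omega) (heq ▸ subset_union_left)
  have hT₂ : T₂ ⊆ W := subset_of_powersetCard_two_subset (by omega) (heq ▸ subset_union_right)
  have := card_union_add_card_inter T₁ T₂
  have := card_le_card (union_subset hT₁ hT₂)
  omega

end Finset

lemma Nat.eq_of_add_two_le_of_choose_two_le {t w : ℕ} (hw : t + 2 ≤ w)
    (h : w.choose 2 ≤ t * 3) : t = 1 ∧ w = 3 ∨ t = 2 ∧ w = 4 := by
  have h2 : w * (w - 1) = 2 * w.choose 2 := by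
    rw [Nat.choose_two_right, Nat.mul_div_cancel' (Nat.even_mul_pred_self w).two_dvd]
  have hw4 : w ≤ 4 := by
    obtain ⟨m, rfl⟩ := Nat.exists_eq_add_of_le (show 2 ≤ w by omega)
    rw [show 2 + m - 1 = m + 1 by omega] at h2
    nlinarith
  interval_cases w <;> simp [Nat.choose] at h <;> omega

theorem starlike_or_exists_triangle_of_intersecting {n : ℕ} {A : Set (KVert n)} (hA : A.Nonempty)
    (hAint : ∀ u ∈ A, ∀ w ∈ A, ¬Disjoint u.1 w.1) :
    Starlike A ∨ ∃ T : Finset (Fin n), #T = 3 ∧ ∀ v : KVert n, v ∈ A ↔ v.1 ⊆ T := by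
  refine or_iff_not_imp_left.2 fun hstar => ?_
  simp only [Starlike, not_exists, not_forall, exists_prop] at hstar
  obtain ⟨u, hu⟩ := hA
  obtain ⟨x, y, hxy, hux⟩ := card_eq_two.mp u.2
  obtain ⟨v, hv, hxv⟩ := hstar x
  obtain ⟨w, hw, hyw⟩ := hstar y
  have huv := hAint u hu v hv
  have huw := hAint u hu w hw
  rw [hux] at huv huw
  obtain ⟨q, hqy, hvy⟩ := exists_eq_pair_of_mem v.2 (by simpa [not_disjoint_iff, hxv] using huv)
  have hxq : x ≠ q := by rintro rfl; simp [hvy] at hxv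
  have hwx : w.1 = {x, q} := by
    have hvw := hAint v hv w hw
    rw [hvy] at hvw
    exact eq_pair_of_mem_of_mem w.2 (by simpa [not_disjoint_iff, hyw] using huw)
      (by simpa [not_disjoint_iff, hyw] using hvw) hxq
  refine ⟨{x, y, q}, card_eq_three.2 ⟨x, y, q, hxy, hxq, hqy.symm, rfl⟩,
    fun z => ⟨fun hz => ?_, fun hz => ?_⟩⟩
  · refine subset_triple_of_not_disjoint_pairs z.2 hxy hxq hqy.symm ?_ ?_ ?_
    · exact hux ▸ hAint u hu z hz
    · exact hvy ▸ hAint v hv z hz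
    · exact hwx ▸ hAint w hw z hz
  · rcases eq_pair_of_subset_triple z.2 hz with h | h | h
    · exact Subtype.ext (h.trans hux.symm) ▸ hu
    · exact Subtype.ext (h.trans hvy.symm) ▸ hv
    · exact Subtype.ext (h.trans hwx.symm) ▸ hw

structure StarTriangleDecomposition {n k : ℕ} (C : Fin k → Set (KVert n)) where
  stars : Finset (Fin k)
  center : Fin k → Fin n
  triangle : Fin k → Finset (Fin n)
  center_mem : ∀ i ∈ stars, ∀ v ∈ C i, center i ∈ v.1
  card_triangle : ∀ i ∉ stars, #(triangle i) = 3
  mem_iff_subset_triangle : ∀ i ∉ stars, ∀ v, v ∈ C i ↔ v.1 ⊆ triangle i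

variable {n k : ℕ} {C : Fin k → Set (KVert n)}

lemma IsProperColoring.nonempty_starTriangleDecomposition (hC : IsProperColoring (KG2 n) C) :
    Nonempty (StarTriangleDecomposition C) := by
  classical
  have h (i : Fin k) : ∃ (a : Fin n) (T : Finset (Fin n)),
      (∀ v ∈ C i, a ∈ v.1) ∨ #T = 3 ∧ ∀ v, v ∈ C i ↔ v.1 ⊆ T := by
    rcases starlike_or_exists_triangle_of_intersecting (hC.2.1 i) (hC.2.2 i) with
      ⟨a, ha⟩ | ⟨T, hT, hTC⟩
    · exact ⟨a, ∅, .inl ha⟩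
    · obtain ⟨a, -⟩ := card_pos.1 (by omega : 0 < #T)
      exact ⟨a, T, .inr ⟨hT, hTC⟩⟩
  choose center triangle h using h
  exact ⟨{ stars := univ.filter fun i => ∀ v ∈ C i, center i ∈ v.1
           center, triangle
           center_mem := fun i hi => (mem_filter.1 hi).2
           card_triangle := fun i hi => ((h i).resolve_left (by simpa using hi)).1
           mem_iff_subset_triangle := fun i hi => ((h i).resolve_left (by simpa using hi)).2 }⟩

namespace StarTriangleDecomposition

variable (D : StarTriangleDecomposition C)

def centers : Finset (Fin n) := D.stars.image D.center

lemma center_notMem_compl_centers {i : Fin k} (hi : i ∈ D.stars) : D.center i ∉ D.centersᶜ :=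
  notMem_compl.2 (mem_image_of_mem _ hi)

lemma exists_triangle_of_subset_compl_centers (hC : IsProperColoring (KG2 n) C) {v : KVert n}
    (hv : v.1 ⊆ D.centersᶜ) : ∃ i ∉ D.stars, v ∈ C i := by
  obtain ⟨i, hi, -⟩ := hC.1 v
  exact ⟨i, fun hs => D.center_notMem_compl_centers hs (hv (D.center_mem i hs v hi)), hi⟩

lemma choose_two_card_compl_centers_le (hC : IsProperColoring (KG2 n) C) :
    (#D.centersᶜ).choose 2 ≤ #D.starsᶜ * 3 :=
  choose_card_le_of_forall_subset (m := 3) (fun i hi => (D.card_triangle i (mem_compl.1 hi)).le)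
    fun e he he2 => by
      obtain ⟨i, hi, hei⟩ := D.exists_triangle_of_subset_compl_centers hC (v := ⟨e, he2⟩) he
      exact ⟨i, mem_compl.2 hi, (D.mem_iff_subset_triangle i hi _).1 hei⟩

lemma card_centers_le : #D.centers ≤ #D.stars := card_image_le

lemma card_centers_add_card_compl : #D.centers + #D.centersᶜ = n :=
  (card_add_card_compl _).trans (Fintype.card_fin n)

lemma card_stars_add_card_compl : #D.stars + #D.starsᶜ = k :=
  (card_add_card_compl _).trans (Fintype.card_fin k)

lemma card_compl_stars_add_two_le (hk : k + 2 ≤ n) : #D.starsᶜ + 2 ≤ #D.centersᶜ := by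
  have := D.card_centers_le
  have := D.card_centers_add_card_compl
  have := D.card_stars_add_card_compl
  omega

/-- With a single triangle class, the star centers fill all but three symbols, so they are
distinct, and the triangle is made of the remaining three. A vertex inside the triangle is
dominated by a star class with center `z`; but for `a` in that vertex, the pair `{z, a}` can only
lie in that same class. -/
lemma false_of_card_compl_stars_eq_one (hC : IsTDColoring (KG2 n) C) (hk : k + 2 ≤ n)
    (ht : #D.starsᶜ = 1) (hw : #D.centersᶜ = 3) : False := by
  obtain ⟨i₀, hi₀⟩ := card_eq_one.mp ht
  have hi₀_unique (i) (hi : i ∉ D.stars) : i = i₀ := mem_singleton.1 (hi₀ ▸ mem_compl.2 hi)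
  have hi₀S : i₀ ∉ D.stars := mem_compl.1 (hi₀ ▸ mem_singleton_self i₀)
  have hinj : Set.InjOn D.center D.stars := card_image_iff.1 <| show #D.centers = #D.stars by
    have := D.card_centers_le
    have := D.card_centers_add_card_compl
    have := D.card_stars_add_card_compl
    omega
  have hWT : D.centersᶜ = D.triangle i₀ := by
    refine eq_of_subset_of_card_le (subset_of_powersetCard_two_subset (by omega) fun e he => ?_)
      (by rw [hw, D.card_triangle i₀ hi₀S])
    obtain ⟨heW, he2⟩ := mem_powersetCard.1 he
    obtain ⟨i, hi, hei⟩ := D.exists_triangle_of_subset_compl_centers hC.1 (v := ⟨e, he2⟩) heW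
    obtain rfl := hi₀_unique i hi
    exact mem_powersetCard.2 ⟨(D.mem_iff_subset_triangle i hi _).1 hei, he2⟩
  obtain ⟨e, heT, he2⟩ :=
    exists_subset_card_eq (show 2 ≤ #(D.triangle i₀) by rw [D.card_triangle i₀ hi₀S]; omega)
  obtain ⟨j, -, hj⟩ := hC.2 ⟨e, he2⟩
  have hjS : j ∈ D.stars := by
    by_contra hjS
    exact (KG2 n).loopless.irrefl _ <|
      hj _ ((D.mem_iff_subset_triangle j hjS _).2 (hi₀_unique j hjS ▸ heT))
  obtain ⟨a, ha⟩ := card_pos.1 (show 0 < #e by omega)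
  have haW : a ∈ D.centersᶜ := hWT ▸ heT ha
  have hza : D.center j ≠ a := fun h => D.center_notMem_compl_centers hjS (h ▸ haW)
  obtain ⟨l, hl, -⟩ := hC.1.1 ⟨{D.center j, a}, card_pair hza⟩
  by_cases hlS : l ∈ D.stars
  · rcases mem_insert.1 (D.center_mem l hlS _ hl) with h | h
    · have hlj : l = j := hinj hlS hjS h
      subst hlj
      exact disjoint_left.1 (hj _ hl) ha (mem_insert_of_mem (mem_singleton_self a))
    · exact D.center_notMem_compl_centers hlS (mem_singleton.1 h ▸ haW)
  · have hsub := (D.mem_iff_subset_triangle l hlS _).1 hl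
    rw [hi₀_unique l hlS, ← hWT] at hsub
    exact D.center_notMem_compl_centers hjS (hsub (mem_insert_self _ _))

lemma false_of_card_compl_stars_eq_two (hC : IsProperColoring (KG2 n) C)
    (ht : #D.starsᶜ = 2) (hw : #D.centersᶜ = 4) : False := by
  obtain ⟨i, j, hij, hij'⟩ := card_eq_two.mp ht
  have hiS : i ∉ D.stars := mem_compl.1 (hij' ▸ mem_insert_self i {j})
  have hjS : j ∉ D.stars := mem_compl.1 (hij' ▸ mem_insert_of_mem (mem_singleton_self j))
  have hcov : D.centersᶜ.powersetCard 2 ⊆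
      (D.triangle i).powersetCard 2 ∪ (D.triangle j).powersetCard 2 := by
    intro e he
    obtain ⟨heW, he2⟩ := mem_powersetCard.1 he
    obtain ⟨l, hl, hel⟩ := D.exists_triangle_of_subset_compl_centers hC (v := ⟨e, he2⟩) heW
    have hel := (D.mem_iff_subset_triangle l hl _).1 hel
    rcases mem_insert.1 (hij' ▸ mem_compl.2 hl) with rfl | hl
    · exact mem_union_left _ (mem_powersetCard.2 ⟨hel, he2⟩)
    · rw [mem_singleton.1 hl] at hel
      exact mem_union_right _ (mem_powersetCard.2 ⟨hel, he2⟩)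
  obtain ⟨e, he, he2⟩ := exists_subset_card_eq <| two_le_card_inter_of_powersetCard_two_subset_union
    hw (D.card_triangle i hiS) (D.card_triangle j hjS) hcov
  obtain ⟨l, -, hl⟩ := hC.1 ⟨e, he2⟩
  exact hij <| (hl i ((D.mem_iff_subset_triangle i hiS _).2 (he.trans inter_subset_left))).trans
    (hl j ((D.mem_iff_subset_triangle j hjS _).2 (he.trans inter_subset_right))).symm

end StarTriangleDecomposition

theorem KG2.le_add_one_of_isTDColoring (hC : IsTDColoring (KG2 n) C) : n ≤ k + 1 := by
  by_contra! hk
  obtain ⟨D⟩ := hC.1.nonempty_starTriangleDecomposition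
  rcases Nat.eq_of_add_two_le_of_choose_two_le (D.card_compl_stars_add_two_le hk)
    (D.choose_two_card_compl_centers_le hC.1) with ⟨ht, hw⟩ | ⟨ht, hw⟩
  · exact D.false_of_card_compl_stars_eq_one hC hk ht hw
  · exact D.false_of_card_compl_stars_eq_two hC.1 ht hw

lemma exists_isTDColoring_of_forall_exists_adj {V : Type*} [Fintype V] {G : SimpleGraph V}
    (h : ∀ v, ∃ w, G.Adj v w) : ∃ C : Fin (Fintype.card V) → Set V, IsTDColoring G C := by
  let e := (Fintype.equivFin V).symm
  refine ⟨fun i => {e i}, ⟨fun v => ⟨e.symm v, by simp, fun i hi => ?_⟩, fun i => ⟨e i, rfl⟩,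
    ?_⟩, fun v => ?_⟩
  · rw [Set.mem_singleton_iff.1 hi, Equiv.symm_apply_apply]
  · rintro i u rfl w rfl
    exact G.loopless.irrefl _
  · obtain ⟨w, hw⟩ := h v
    refine ⟨e.symm w, ⟨_, rfl⟩, fun u hu => ?_⟩
    rwa [Set.mem_singleton_iff.1 hu, Equiv.apply_symm_apply]

lemma KG2.exists_adj (hn : 4 ≤ n) (v : KVert n) : ∃ w, (KG2 n).Adj v w := by
  obtain ⟨f, hf, hf2⟩ := exists_subset_card_eq (show 2 ≤ #v.1ᶜ by simp [card_compl, v.2]; omega)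
  exact ⟨⟨f, hf2⟩, disjoint_of_subset_right hf disjoint_compl_right⟩

/-- For every `n ≥ 5`, `n - 1 ≤ χ_td(KG(n,2))`. -/
theorem stmt6 (n : ℕ) (hn : 5 ≤ n) :
    n - 1 ≤ tdChromNum (KG2 n) := by
  obtain ⟨C, hC⟩ := exists_isTDColoring_of_forall_exists_adj (KG2.exists_adj (by omega : 4 ≤ n))
  refine le_csInf ⟨_, C, hC⟩ ?_
  rintro k ⟨C, hC⟩
  have := KG2.le_add_one_of_isTDColoring hC
  omega
end

section
/- Let n ≥ 6 and suppose f is a total dominator coloring of the Kneser graph KG(n,2) with exactly n − 1 nonempty color classes. If t denotes the number of triangular color classes of f, then 1 ≤ t ≤ 5. -/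
/-! An independent set of `KG(n,2)` is an intersecting family of pairs, hence a star or a
triangle. Fix a centre for every star class. With `k < n` classes of which `t` are triangles,
at least `t + 1` symbols are the centre of no star class, and every pair of such free symbols
lies in a triangle class; hence `C(t + 1, 2) ≤ 3t`, so `t ≤ 5`.
If `t = 0` and `k = n - 1`, the same count leaves exactly one free symbol `z` and forces the
centres to be distinct, so the class with centre `x` contains `{x, z}`. Then no class
dominates a vertex `{z, x}`: a dominating class `C j` would contain `{c j, z}`. -/

namespace Finset

variable {α : Type*} [DecidableEq α] {s : Finset α} {a b c : α}

theorem mem_of_not_disjoint_pair (h : ¬Disjoint s {a, b}) (ha : a ∉ s) : b ∈ s := by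
  simp_all [Finset.disjoint_insert_right]

theorem eq_pair_of_card_eq_two (hs : s.card = 2) (ha : a ∈ s) (hb : b ∈ s) (hab : a ≠ b) :
    s = {a, b} :=
  (eq_of_subset_of_card_le (by simp [insert_subset_iff, ha, hb]) (by simp [hs, hab])).symm

theorem eq_pair_of_not_disjoint_triangle (hs : s.card = 2) (hab : a ≠ b) (hac : a ≠ c)
    (hbc : b ≠ c) (h₁ : ¬Disjoint s {a, b}) (h₂ : ¬Disjoint s {a, c})
    (h₃ : ¬Disjoint s {b, c}) : s = {a, b} ∨ s = {a, c} ∨ s = {b, c} := by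
  by_cases ha : a ∈ s <;> by_cases hb : b ∈ s
  · exact .inl (eq_pair_of_card_eq_two hs ha hb hab)
  · exact .inr (.inl (eq_pair_of_card_eq_two hs ha (mem_of_not_disjoint_pair h₃ hb) hac))
  · exact .inr (.inr (eq_pair_of_card_eq_two hs hb (mem_of_not_disjoint_pair h₂ ha) hbc))
  · exact absurd (mem_of_not_disjoint_pair h₁ ha) hb

end Finset

section

variable {n k : ℕ}

theorem starlike_or_triangular {A : Set (KVert n)} (hne : A.Nonempty)
    (hA : ∀ u ∈ A, ∀ w ∈ A, ¬(KG2 n).Adj u w) : Starlike A ∨ Triangular A := by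
  refine or_iff_not_imp_left.2 fun hstar => ?_
  simp only [Starlike, not_exists, not_forall, exists_prop] at hstar
  obtain ⟨u, hu⟩ := hne
  obtain ⟨a, b, hab, hu₁⟩ := Finset.card_eq_two.1 u.2
  obtain ⟨w, hw, haw⟩ := hstar a
  have hbw : b ∈ w.1 := Finset.mem_of_not_disjoint_pair (hu₁ ▸ hA w hw u hu) haw
  obtain ⟨c, hcw, hcb⟩ := Finset.exists_mem_ne (by rw [w.2]; omega) b
  have hw₁ := Finset.eq_pair_of_card_eq_two w.2 hbw hcw hcb.symm
  obtain ⟨x, hx, hbx⟩ := hstar b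
  have hax : a ∈ x.1 := Finset.mem_of_not_disjoint_pair
    (by rw [Finset.pair_comm, ← hu₁]; exact hA x hx u hu) hbx
  have hcx : c ∈ x.1 := Finset.mem_of_not_disjoint_pair (hw₁ ▸ hA x hx w hw) hbx
  have hac : a ≠ c := fun h => haw (h ▸ hcw)
  have hx₁ := Finset.eq_pair_of_card_eq_two x.2 hax hcx hac
  refine ⟨a, b, c, hab, hac, hcb.symm, Set.ext fun v => ⟨fun hv => ?_, ?_⟩⟩
  · exact Finset.eq_pair_of_not_disjoint_triangle v.2 hab hac hcb.symm
      (hu₁ ▸ hA v hv u hu) (hx₁ ▸ hA v hv x hx) (hw₁ ▸ hA v hv w hw)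
  · rintro (h | h | h)
    · rwa [Subtype.ext (h.trans hu₁.symm)]
    · rwa [Subtype.ext (h.trans hx₁.symm)]
    · rwa [Subtype.ext (h.trans hw₁.symm)]

theorem Triangular.ncard_le_three {A : Set (KVert n)} (hA : Triangular A) : A.ncard ≤ 3 := by
  obtain ⟨a, b, c, hab, hac, hbc, rfl⟩ := hA
  calc _ ≤ ({⟨{a, b}, Finset.card_pair hab⟩, ⟨{a, c}, Finset.card_pair hac⟩,
          ⟨{b, c}, Finset.card_pair hbc⟩} : Set (KVert n)).ncard :=
        Set.ncard_le_ncard (fun v hv => by simpa [Subtype.ext_iff] using hv)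
    _ ≤ 3 := (Set.ncard_insert_le _ _).trans (by grw [Set.ncard_insert_le, Set.ncard_singleton])

theorem Nat.le_five_of_choose_two_succ_le {t : ℕ} (h : (t + 1).choose 2 ≤ 3 * t) : t ≤ 5 := by
  rw [Nat.choose_two_right, Nat.add_sub_cancel] at h
  by_contra! ht
  have : 7 * t ≤ (t + 1) * t := Nat.mul_le_mul_right t (by omega)
  omega

variable {C : Fin k → Set (KVert n)} {c : Fin k → Fin n}

open Classical in
noncomputable def triangularClasses (C : Fin k → Set (KVert n)) : Finset (Fin k) :=
  {i | Triangular (C i)}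

theorem mem_triangularClasses {i : Fin k} : i ∈ triangularClasses C ↔ Triangular (C i) := by
  simp [triangularClasses]

theorem coe_triangularClasses : (triangularClasses C : Set (Fin k)) = {i | Triangular (C i)} :=
  Set.ext fun _ => mem_triangularClasses

noncomputable def freeSymbols (C : Fin k → Set (KVert n)) (c : Fin k → Fin n) :
    Finset (Fin n) :=
  ((triangularClasses C)ᶜ.image c)ᶜ

theorem mem_freeSymbols {x : Fin n} :
    x ∈ freeSymbols C c ↔ ∀ i, ¬Triangular (C i) → c i ≠ x := by
  simp [freeSymbols, mem_triangularClasses]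

theorem card_sub_le_card_freeSymbols :
    n - (k - (triangularClasses C).card) ≤ (freeSymbols C c).card := by
  have := Finset.card_image_le (s := (triangularClasses C)ᶜ) (f := c)
  rw [Finset.card_compl, Fintype.card_fin] at this
  rw [freeSymbols, Finset.card_compl, Fintype.card_fin]
  omega

theorem IsProperColoring.exists_centers (hC : IsProperColoring (KG2 n) C) :
    ∃ c : Fin k → Fin n, ∀ i, ¬Triangular (C i) → ∀ v ∈ C i, c i ∈ v.1 := by
  refine Classical.axiomOfChoice (r := fun i a => ¬Triangular (C i) → ∀ v ∈ C i, a ∈ v.1)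
    fun i => ?_
  obtain ⟨v, hv⟩ := hC.2.1 i
  rcases starlike_or_triangular ⟨v, hv⟩ (hC.2.2 i) with ⟨a, ha⟩ | htri
  · exact ⟨a, fun _ => ha⟩
  · obtain ⟨a, -⟩ := Finset.card_pos.1 (v.2.symm ▸ two_pos : 0 < v.1.card)
    exact ⟨a, fun h => (h htri).elim⟩

theorem triangular_of_subset_freeSymbols
    (hc : ∀ i, ¬Triangular (C i) → ∀ v ∈ C i, c i ∈ v.1) {i : Fin k} {v : KVert n}
    (hv : v ∈ C i) (hvZ : v.1 ⊆ freeSymbols C c) : Triangular (C i) := by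
  by_contra h
  exact mem_freeSymbols.1 (hvZ (hc i h v hv)) i h rfl

theorem IsProperColoring.choose_two_card_freeSymbols_le (hC : IsProperColoring (KG2 n) C)
    (hc : ∀ i, ¬Triangular (C i) → ∀ v ∈ C i, c i ∈ v.1) :
    (freeSymbols C c).card.choose 2 ≤ 3 * (triangularClasses C).card := by
  choose col hcol using fun v => (hC.1 v).exists
  let pairs : Finset (KVert n) := ((freeSymbols C c).powersetCard 2).subtype (·.card = 2)
  have hpairs : pairs.card = (freeSymbols C c).card.choose 2 := by
    rw [Finset.card_subtype, Finset.filter_true_of_mem fun s hs => (Finset.mem_powersetCard.1 hs).2,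
      Finset.card_powersetCard]
  rw [← hpairs]
  refine Finset.card_le_mul_card_image_of_maps_to (f := col) (fun v hv => ?_) 3 fun i hi => ?_
  · exact mem_triangularClasses.2 <| triangular_of_subset_freeSymbols hc (hcol v)
      (Finset.mem_powersetCard.1 (Finset.mem_subtype.1 hv)).1
  · calc _ = (({v ∈ pairs | col v = i} : Finset (KVert n)) : Set (KVert n)).ncard :=
          (Set.ncard_coe_finset _).symm
      _ ≤ (C i).ncard := Set.ncard_le_ncard fun v hv => by
          obtain ⟨-, rfl⟩ := Finset.mem_filter.1 hv
          exact hcol v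
      _ ≤ 3 := (mem_triangularClasses.1 hi).ncard_le_three

theorem IsProperColoring.card_triangularClasses_le_five (hC : IsProperColoring (KG2 n) C)
    (hkn : k < n) : (triangularClasses C).card ≤ 5 := by
  obtain ⟨c, hc⟩ := hC.exists_centers
  have hZ : (triangularClasses C).card + 1 ≤ (freeSymbols C c).card := by
    have := card_sub_le_card_freeSymbols (C := C) (c := c)
    have := (triangularClasses C).card_le_univ
    rw [Fintype.card_fin] at this
    omega
  exact Nat.le_five_of_choose_two_succ_le <|
    (Nat.choose_le_choose 2 hZ).trans (hC.choose_two_card_freeSymbols_le hc)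

theorem IsTDColoring.not_injective_of_forall_mem (hC : IsTDColoring (KG2 n) C)
    (hc : ∀ i, ∀ v ∈ C i, c i ∈ v.1) {z : Fin n} (hz : ∀ i, c i ≠ z)
    (i₀ : Fin k) : ¬Function.Injective c := by
  intro hinj
  obtain ⟨j, -, hj⟩ := hC.2 ⟨{z, c i₀}, Finset.card_pair (hz i₀).symm⟩
  let w : KVert n := ⟨{c j, z}, Finset.card_pair (hz j)⟩
  obtain ⟨m, hm, -⟩ := hC.1.1 w
  have hcm : c m = c j := by
    simpa [w, hz m] using hc m w hm
  rw [hinj hcm] at hm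
  exact Finset.disjoint_left.1 (hj w hm) (Finset.mem_insert_self _ _) (by simp [w])

theorem IsTDColoring.triangularClasses_nonempty (hC : IsTDColoring (KG2 n) C) (hk : 0 < k)
    (hkn : k < n) : (triangularClasses C).Nonempty := by
  rw [Finset.nonempty_iff_ne_empty]
  intro hT
  obtain ⟨c, hc⟩ := hC.1.exists_centers
  have hstar : ∀ i, ¬Triangular (C i) := fun i h => by
    simpa [hT] using mem_triangularClasses.2 h
  have hZ₁ := card_sub_le_card_freeSymbols (C := C) (c := c)
  have hZ₂ := hC.1.choose_two_card_freeSymbols_le hc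
  rw [hT, Finset.card_empty, mul_zero, Nat.le_zero, Nat.choose_eq_zero_iff] at hZ₂
  rw [hT, Finset.card_empty, Nat.sub_zero] at hZ₁
  obtain ⟨z, hz⟩ := Finset.card_pos.1 (show 0 < (freeSymbols C c).card by omega)
  have hinj : Function.Injective c := by
    have := Finset.card_image_le (s := Finset.univ) (f := c)
    rw [freeSymbols, hT, Finset.compl_empty, Finset.card_compl, Fintype.card_fin] at hZ₂
    rw [Finset.card_univ, Fintype.card_fin] at this
    have himage : (Finset.univ.image c).card = (Finset.univ : Finset (Fin k)).card := by
      rw [Finset.card_univ, Fintype.card_fin]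
      omega
    simpa using Finset.card_image_iff.1 himage
  exact hC.not_injective_of_forall_mem (fun i => hc i (hstar i))
    (fun i => mem_freeSymbols.1 hz i (hstar i)) ⟨0, hk⟩ hinj

end

/-- Let `n ≥ 6` and let `C` be a total dominator coloring of
`KG(n,2)` with exactly `n - 1` nonempty color classes. If `t` is the number of
triangular color classes of `C`, then `1 ≤ t ≤ 5`. -/
theorem stmt11 (n : ℕ) (hn : 6 ≤ n)
    (C : Fin (n - 1) → Set (KVert n)) (hC : IsTDColoring (KG2 n) C)
    (t : ℕ) (ht : t = {i : Fin (n - 1) | Triangular (C i)}.ncard) :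
    1 ≤ t ∧ t ≤ 5 := by
  rw [ht, ← coe_triangularClasses, Set.ncard_coe_finset]
  exact ⟨(hC.triangularClasses_nonempty (by omega) (by omega)).card_pos,
    hC.1.card_triangularClasses_le_five (by omega)⟩
end
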